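/- Let T > 0, let y : (0,T] → ℝ be a bounded C¹ function, and let s ∈ [1,2). Let (aₙ)ₙ≥₁ be a strictly decreasing sequence in (0,T] with aₙ → 0, y(aₙ) = 0 for all n, and y(x) ≠ 0 for all x ∈ (a_{n+1}, aₙ) and all n (consecutive zeros). Suppose there exist constants c₁, c₂, ε₀ > 0 and a function k : (0,ε₀) → ℕ such that for all ε ∈ (0,ε₀): aₙ − a_{n+1} ≤ ε for every n ≥ k(ε); c₁·ε^{2−s} ≤ Σ_{n ≥ k(ε)} (max_{x∈[a_{n+1},aₙ]} |y(x)|)·(aₙ − a_{n+1}); and a_{k(ε)}·sup_{x∈(0,a_{k(ε)}]} |y(x)| + ε·∫_{a_{k(ε)}}^{a₁} |y′(x)| dx ≤ c₂·ε^{2−s}. Then the graph G(y) satisfies dim_B G(y) = s and 0 < M_*^{s}(G(y)) ≤ M^{*s}(G(y)) < ∞, i.e. y is s-dimensional fractal oscillatory near x = 0. -/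

import Mathlib

/-!
Above each interval `[a (n+1), a n]` with `n ≥ k ε` (of length at most `ε`) the `ε`-neighbourhood
of the graph contains the rectangle between `0` and the extreme value of `y` there, since `y`
vanishes at `a (n+1)` and takes every intermediate value. These rectangles are disjoint, so
`vol(G_ε) ≥ c₁ ε^(2-s)`. Conversely, over `(0, a (k ε)]` the graph lies in a box of height
`2 sup |y|`, and over `[a (k ε), T]` it is covered by about `T / ε` boxes of width `3ε`, each of
height `2ε` plus twice the variation `∫ |y'|` over its base; hence `vol(G_ε) ≤ C ε^(2-s)`.
Such two-sided bounds force both Minkowski contents at exponent `s` to be positive and finite,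
which pins both box dimensions to `s`.
-/

open Set Filter MeasureTheory Real

noncomputable section

/-- The Euclidean ε-neighborhood `A_ε = {y : dist(y, A) < ε}` of a set `A ⊆ ℝ²`
(with the Euclidean distance). -/
def euclNbhd (A : Set (ℝ × ℝ)) (ε : ℝ) : Set (ℝ × ℝ) :=
  {y | ∃ a ∈ A, Real.sqrt ((y.1 - a.1) ^ 2 + (y.2 - a.2) ^ 2) < ε}

/-- Lower `s`-dimensional Minkowski content of a set `A ⊆ ℝ²`:
`liminf_{ε→0⁺} vol₂(A_ε) / ε^{2-s}`. -/
def lowerMinkowskiContent (A : Set (ℝ × ℝ)) (s : ℝ) : ENNReal :=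
  Filter.liminf
    (fun ε : ℝ => MeasureTheory.volume (euclNbhd A ε) / ENNReal.ofReal (ε ^ (2 - s)))
    (nhdsWithin 0 (Set.Ioi 0))

/-- Upper `s`-dimensional Minkowski content of a set `A ⊆ ℝ²`:
`limsup_{ε→0⁺} vol₂(A_ε) / ε^{2-s}`. -/
def upperMinkowskiContent (A : Set (ℝ × ℝ)) (s : ℝ) : ENNReal :=
  Filter.limsup
    (fun ε : ℝ => MeasureTheory.volume (euclNbhd A ε) / ENNReal.ofReal (ε ^ (2 - s)))
    (nhdsWithin 0 (Set.Ioi 0))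

/-- Lower box dimension: `inf {s ≥ 0 : M_*^s(A) = 0}`. -/
def lowerBoxDim (A : Set (ℝ × ℝ)) : ℝ :=
  sInf {s : ℝ | 0 ≤ s ∧ lowerMinkowskiContent A s = 0}

/-- Upper box dimension: `inf {s ≥ 0 : M^{*s}(A) = 0}`. -/
def upperBoxDim (A : Set (ℝ × ℝ)) : ℝ :=
  sInf {s : ℝ | 0 ≤ s ∧ upperMinkowskiContent A s = 0}

end

open Topology

lemma euclNbhd_mono {A B : Set (ℝ × ℝ)} (h : A ⊆ B) (ε : ℝ) : euclNbhd A ε ⊆ euclNbhd B ε :=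
  fun _ ⟨a, ha, hd⟩ => ⟨a, h ha, hd⟩

lemma euclNbhd_union (A B : Set (ℝ × ℝ)) (ε : ℝ) :
    euclNbhd (A ∪ B) ε = euclNbhd A ε ∪ euclNbhd B ε := by
  ext p
  simp only [euclNbhd, mem_ofPred_eq, mem_union, or_and_right, exists_or]

lemma mk_mem_euclNbhd {A : Set (ℝ × ℝ)} {x x' w ε : ℝ} (h : (x, w) ∈ A) (hx : |x' - x| < ε) :
    (x', w) ∈ euclNbhd A ε :=
  ⟨(x, w), h, by simpa [Real.sqrt_sq_eq_abs] using hx⟩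

lemma euclNbhd_subset_prod {A : Set (ℝ × ℝ)} {α β γ δ : ℝ} (h : A ⊆ Icc α β ×ˢ Icc γ δ)
    (ε : ℝ) : euclNbhd A ε ⊆ Ioo (α - ε) (β + ε) ×ˢ Ioo (γ - ε) (δ + ε) := by
  rintro p ⟨q, hq, hd⟩
  have h₁ : |p.1 - q.1| < ε :=
    (abs_le_sqrt (by nlinarith [sq_nonneg (p.2 - q.2)])).trans_lt hd
  have h₂ : |p.2 - q.2| < ε :=
    (abs_le_sqrt (by nlinarith [sq_nonneg (p.1 - q.1)])).trans_lt hd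
  obtain ⟨⟨hα, hβ⟩, hγ, hδ⟩ := h hq
  rw [abs_lt] at h₁ h₂
  exact ⟨⟨by linarith, by linarith⟩, by linarith, by linarith⟩

lemma volume_euclNbhd_le_of_subset_prod {A : Set (ℝ × ℝ)} {α β γ δ : ℝ}
    (h : A ⊆ Icc α β ×ˢ Icc γ δ) (ε : ℝ) :
    volume (euclNbhd A ε) ≤
      ENNReal.ofReal (β - α + 2 * ε) * ENNReal.ofReal (δ - γ + 2 * ε) := by
  calc volume (euclNbhd A ε)
      ≤ volume (Ioo (α - ε) (β + ε) ×ˢ Ioo (γ - ε) (δ + ε)) :=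
        measure_mono (euclNbhd_subset_prod h ε)
    _ = ENNReal.ofReal (β - α + 2 * ε) * ENNReal.ofReal (δ - γ + 2 * ε) := by
        rw [Measure.volume_eq_prod, Measure.prod_prod, Real.volume_Ioo, Real.volume_Ioo]
        ring_nf

section MinkowskiContent

variable {A : Set (ℝ × ℝ)}

lemma ofReal_mul_rpow_div_ofReal_rpow (C : ℝ) {ε : ℝ} (hε : 0 < ε) (s t : ℝ) :
    ENNReal.ofReal (C * ε ^ (2 - s)) / ENNReal.ofReal (ε ^ (2 - t)) =
      ENNReal.ofReal (C * ε ^ (t - s)) := by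
  rw [← ENNReal.ofReal_div_of_pos (rpow_pos_of_pos hε _), mul_div_assoc, ← rpow_sub hε,
    show 2 - s - (2 - t) = t - s by ring]

lemma ofReal_le_lowerMinkowskiContent {s c : ℝ}
    (h : ∀ᶠ ε in 𝓝[>] 0, ENNReal.ofReal (c * ε ^ (2 - s)) ≤ volume (euclNbhd A ε)) :
    ENNReal.ofReal c ≤ lowerMinkowskiContent A s := by
  refine le_liminf_of_le (by isBoundedDefault) ?_
  filter_upwards [h, self_mem_nhdsWithin] with ε hε hε₀
  calc ENNReal.ofReal c = ENNReal.ofReal (c * ε ^ (2 - s)) / ENNReal.ofReal (ε ^ (2 - s)) := by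
        rw [ofReal_mul_rpow_div_ofReal_rpow c hε₀, sub_self, rpow_zero, mul_one]
    _ ≤ volume (euclNbhd A ε) / ENNReal.ofReal (ε ^ (2 - s)) := ENNReal.div_le_div_right hε _

lemma eventually_volume_div_le {s C : ℝ}
    (h : ∀ᶠ ε in 𝓝[>] 0, volume (euclNbhd A ε) ≤ ENNReal.ofReal (C * ε ^ (2 - s))) (t : ℝ) :
    ∀ᶠ ε in 𝓝[>] 0, volume (euclNbhd A ε) / ENNReal.ofReal (ε ^ (2 - t)) ≤
      ENNReal.ofReal (C * ε ^ (t - s)) := by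
  filter_upwards [h, self_mem_nhdsWithin] with ε hε hε₀
  rw [← ofReal_mul_rpow_div_ofReal_rpow C hε₀]
  exact ENNReal.div_le_div_right hε _

lemma upperMinkowskiContent_le_ofReal {s C : ℝ}
    (h : ∀ᶠ ε in 𝓝[>] 0, volume (euclNbhd A ε) ≤ ENNReal.ofReal (C * ε ^ (2 - s))) :
    upperMinkowskiContent A s ≤ ENNReal.ofReal C := by
  refine limsup_le_of_le (by isBoundedDefault) ?_
  simpa only [sub_self, rpow_zero, mul_one] using eventually_volume_div_le h s

lemma upperMinkowskiContent_eq_zero_of_lt {s t C : ℝ}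
    (h : ∀ᶠ ε in 𝓝[>] 0, volume (euclNbhd A ε) ≤ ENNReal.ofReal (C * ε ^ (2 - s)))
    (hst : s < t) : upperMinkowskiContent A t = 0 := by
  have hlim : Tendsto (fun ε : ℝ => ENNReal.ofReal (C * ε ^ (t - s))) (𝓝[>] 0) (𝓝 0) := by
    have := ((continuous_rpow_const (sub_pos.2 hst).le).tendsto' 0 0
      (zero_rpow (sub_pos.2 hst).ne')).const_mul C
    simpa using (ENNReal.tendsto_ofReal this).mono_left nhdsWithin_le_nhds
  refine le_antisymm ?_ bot_le
  calc upperMinkowskiContent A t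
      ≤ limsup (fun ε : ℝ => ENNReal.ofReal (C * ε ^ (t - s))) (𝓝[>] 0) :=
        limsup_le_limsup (eventually_volume_div_le h t)
    _ = 0 := hlim.limsup_eq

lemma lowerMinkowskiContent_le_upperMinkowskiContent (s : ℝ) :
    lowerMinkowskiContent A s ≤ upperMinkowskiContent A s :=
  liminf_le_limsup

lemma lowerMinkowskiContent_anti {s t : ℝ} (hst : s ≤ t) :
    lowerMinkowskiContent A t ≤ lowerMinkowskiContent A s := by
  refine liminf_le_liminf ?_
  filter_upwards [Ioo_mem_nhdsGT one_pos] with ε hε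
  exact ENNReal.div_le_div_left
    (ENNReal.ofReal_le_ofReal (rpow_le_rpow_of_exponent_ge hε.1 hε.2.le (by linarith))) _

lemma sInf_setOf_nonneg_and_eq_zero {M : ℝ → ENNReal} {s : ℝ} (hs : 0 ≤ s)
    (hM : ∀ t, M t = 0 ↔ s < t) : sInf {t : ℝ | 0 ≤ t ∧ M t = 0} = s := by
  have : {t : ℝ | 0 ≤ t ∧ M t = 0} = Ioi s := by
    ext t
    simp only [mem_ofPred_eq, mem_Ioi, hM]
    exact ⟨And.right, fun h => ⟨hs.trans h.le, h⟩⟩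
  rw [this, csInf_Ioi]

theorem boxDim_eq_of_volume_euclNbhd_bounds {s c C : ℝ} (hs : 0 ≤ s) (hc : 0 < c)
    (hlow : ∀ᶠ ε in 𝓝[>] 0, ENNReal.ofReal (c * ε ^ (2 - s)) ≤ volume (euclNbhd A ε))
    (hup : ∀ᶠ ε in 𝓝[>] 0, volume (euclNbhd A ε) ≤ ENNReal.ofReal (C * ε ^ (2 - s))) :
    lowerBoxDim A = s ∧ upperBoxDim A = s ∧
      0 < lowerMinkowskiContent A s ∧ upperMinkowskiContent A s < ⊤ := by
  have hpos : ∀ t ≤ s, 0 < lowerMinkowskiContent A t := fun t ht =>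
    (ENNReal.ofReal_pos.2 hc).trans_le
      ((ofReal_le_lowerMinkowskiContent hlow).trans (lowerMinkowskiContent_anti ht))
  have hzero : ∀ t, s < t → upperMinkowskiContent A t = 0 := fun t =>
    upperMinkowskiContent_eq_zero_of_lt hup
  refine ⟨sInf_setOf_nonneg_and_eq_zero hs fun t => ⟨fun h => ?_, fun h => ?_⟩,
    sInf_setOf_nonneg_and_eq_zero hs fun t => ⟨fun h => ?_, hzero t⟩,
    hpos s le_rfl, (upperMinkowskiContent_le_ofReal hup).trans_lt ENNReal.ofReal_lt_top⟩
  · exact lt_of_not_ge fun hts => (hpos t hts).ne' h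
  · exact le_antisymm ((lowerMinkowskiContent_le_upperMinkowskiContent t).trans (hzero t h).le)
      bot_le
  · exact lt_of_not_ge fun hts =>
      ((hpos t hts).trans_le (lowerMinkowskiContent_le_upperMinkowskiContent t)).ne' h

end MinkowskiContent

def IsVariationMajorant (f V : ℝ → ℝ) (s : Set ℝ) : Prop :=
  ∀ u ∈ s, ∀ v ∈ s, u ≤ v → |f v - f u| ≤ V v - V u

namespace IsVariationMajorant

variable {f V : ℝ → ℝ} {s : Set ℝ}

lemma mono {t : Set ℝ} (hV : IsVariationMajorant f V s) (hts : t ⊆ s) :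
    IsVariationMajorant f V t :=
  fun u hu v hv huv => hV u (hts hu) v (hts hv) huv

lemma monotoneOn (hV : IsVariationMajorant f V s) : MonotoneOn V s :=
  fun u hu v hv huv => sub_nonneg.1 ((abs_nonneg _).trans (hV u hu v hv huv))

lemma graphOn_Icc_subset_prod {α β : ℝ} (hV : IsVariationMajorant f V (Icc α β)) :
    graphOn f (Icc α β) ⊆ Icc α β ×ˢ Icc (f α - (V β - V α)) (f α + (V β - V α)) := by
  rintro _ ⟨x, hx, rfl⟩
  have hα : α ∈ Icc α β := ⟨le_rfl, hx.1.trans hx.2⟩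
  have hβ : β ∈ Icc α β := ⟨hx.1.trans hx.2, le_rfl⟩
  have := (hV α hα x hx hx.1).trans (sub_le_sub_right (hV.monotoneOn hx hβ hx.2) _)
  exact ⟨hx, by linarith [(abs_le.1 this).1], by linarith [(abs_le.1 this).2]⟩

variable {ε : ℝ}

lemma volume_euclNbhd_graphOn_le_of_sub_le {α β : ℝ} (hV : IsVariationMajorant f V (Icc α β))
    (hαβ : α ≤ β) (hβ : β - α ≤ ε) :
    volume (euclNbhd (graphOn f (Icc α β)) ε) ≤
      ENNReal.ofReal (6 * ε * (V β - V α) + 6 * ε ^ 2) := by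
  have hD : 0 ≤ V β - V α := sub_nonneg.2 (hV.monotoneOn ⟨le_rfl, hαβ⟩ ⟨hαβ, le_rfl⟩ hαβ)
  refine (volume_euclNbhd_le_of_subset_prod hV.graphOn_Icc_subset_prod ε).trans ?_
  rw [← ENNReal.ofReal_mul (by linarith)]
  refine ENNReal.ofReal_le_ofReal ?_
  nlinarith

/-- Each of the `N + 1` pieces of length at most `ε` contributes a box of size
`3ε × (2 ΔV + 2ε)`. -/
lemma volume_euclNbhd_graphOn_le_of_sub_le_mul (hε : 0 ≤ ε) (N : ℕ) :
    ∀ {α β : ℝ}, IsVariationMajorant f V (Icc α β) → α ≤ β → β - α ≤ (N + 1) * ε →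
      volume (euclNbhd (graphOn f (Icc α β)) ε) ≤
        ENNReal.ofReal (6 * ε * (V β - V α) + 6 * (N + 1) * ε ^ 2) := by
  induction N with
  | zero =>
    intro α β hV hαβ hβ
    simpa using hV.volume_euclNbhd_graphOn_le_of_sub_le hαβ (by simpa using hβ)
  | succ N ih =>
    intro α β hV hαβ hβ
    push_cast at hβ
    by_cases hshort : β - α ≤ (N + 1) * ε
    · refine (ih hV hαβ hshort).trans (ENNReal.ofReal_le_ofReal ?_)
      push_cast
      nlinarith [sq_nonneg ε]
    set m := α + (N + 1) * ε
    have hαm : α ≤ m := by simp only [m]; nlinarith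
    have hmβ : m ≤ β := by simp only [m]; linarith
    have hmono := hV.monotoneOn
    have hVαm : V α ≤ V m := hmono ⟨le_rfl, hαβ⟩ ⟨hαm, hmβ⟩ hαm
    have hVmβ : V m ≤ V β := hmono ⟨hαm, hmβ⟩ ⟨hαβ, le_rfl⟩ hmβ
    rw [← Icc_union_Icc_eq_Icc hαm hmβ, graphOn_union, euclNbhd_union]
    calc volume (euclNbhd (graphOn f (Icc α m)) ε ∪ euclNbhd (graphOn f (Icc m β)) ε)
        ≤ ENNReal.ofReal (6 * ε * (V m - V α) + 6 * (N + 1) * ε ^ 2) +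
            ENNReal.ofReal (6 * ε * (V β - V m) + 6 * ε ^ 2) :=
          (measure_union_le _ _).trans (add_le_add
            (ih (hV.mono (Icc_subset_Icc_right hmβ)) hαm (by simp only [m]; linarith))
            ((hV.mono (Icc_subset_Icc_left hαm)).volume_euclNbhd_graphOn_le_of_sub_le hmβ
              (by simp only [m]; linarith)))
      _ = ENNReal.ofReal (6 * ε * (V β - V α) + 6 * ((N + 1 : ℕ) + 1) * ε ^ 2) := by
          rw [← ENNReal.ofReal_add (by nlinarith) (by nlinarith)]
          push_cast
          ring_nf

lemma volume_euclNbhd_graphOn_le {α β : ℝ} (hV : IsVariationMajorant f V (Icc α β))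
    (hαβ : α ≤ β) (hε : 0 < ε) :
    volume (euclNbhd (graphOn f (Icc α β)) ε) ≤
      ENNReal.ofReal (6 * ε * (V β - V α) + 6 * ε * (β - α) + 12 * ε ^ 2) := by
  set N := ⌈(β - α) / ε⌉₊
  have hN : (N : ℝ) < (β - α) / ε + 1 := Nat.ceil_lt_add_one (div_nonneg (by linarith) hε.le)
  have hNε : (N : ℝ) * ε < β - α + ε := by
    have := mul_lt_mul_of_pos_right hN hε
    rwa [add_mul, div_mul_cancel₀ _ hε.ne', one_mul] at this
  have hβ : β - α ≤ (N + 1) * ε := by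
    have := (div_le_iff₀ hε).1 (Nat.le_ceil ((β - α) / ε))
    linarith
  refine (volume_euclNbhd_graphOn_le_of_sub_le_mul hε.le N hV hαβ hβ).trans
    (ENNReal.ofReal_le_ofReal ?_)
  nlinarith

end IsVariationMajorant

section DerivWithin

variable {y : ℝ → ℝ} {s : Set ℝ} {u v : ℝ}

lemma integral_derivWithin_eq_sub (hy : ContDiffOn ℝ 1 y s) (huv : u ≤ v) (hs : Icc u v ⊆ s) :
    ∫ x in u..v, derivWithin y s x = y v - y u := by
  rw [← intervalIntegral.integral_deriv_of_contDiffOn_Icc (hy.mono hs) huv,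
    intervalIntegral.integral_of_le huv, intervalIntegral.integral_of_le huv]
  refine integral_congr_ae ?_
  rw [← restrict_Ioo_eq_restrict_Ioc]
  filter_upwards [self_mem_ae_restrict measurableSet_Ioo] with x hx
  exact derivWithin_of_mem_nhds (mem_of_superset (Icc_mem_nhds hx.1 hx.2) hs)

lemma intervalIntegrable_abs_derivWithin (hy : ContDiffOn ℝ 1 y s) (hs : UniqueDiffOn ℝ s)
    (huv : uIcc u v ⊆ s) : IntervalIntegrable (fun x => |derivWithin y s x|) volume u v :=
  ((hy.continuousOn_derivWithin hs le_rfl).abs.mono huv).intervalIntegrable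

lemma isVariationMajorant_integral_abs_derivWithin (hy : ContDiffOn ℝ 1 y s)
    (hs : UniqueDiffOn ℝ s) {c d : ℝ} (hcd : Icc c d ⊆ s) :
    IsVariationMajorant y (fun x => ∫ t in c..x, |derivWithin y s t|) (Icc c d) := by
  intro u hu v hv huv
  have hint : ∀ x ∈ Icc c d, IntervalIntegrable (fun x => |derivWithin y s x|) volume c x :=
    fun x hx => intervalIntegrable_abs_derivWithin hy hs
      (by rw [uIcc_of_le hx.1]; exact (Icc_subset_Icc_right hx.2).trans hcd)
  rw [intervalIntegral.integral_interval_sub_left (hint v hv) (hint u hu),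
    ← integral_derivWithin_eq_sub hy huv ((Icc_subset_Icc hu.1 hv.2).trans hcd)]
  exact intervalIntegral.abs_integral_le_integral_abs huv

end DerivWithin

lemma volume_euclNbhd_graphOn_Ioc_le {y : ℝ → ℝ} {T b S ε : ℝ} (hy : ContDiffOn ℝ 1 y (Ioc 0 T))
    (hb : b ∈ Ioc 0 T) (hS : ∀ x ∈ Ioc 0 b, |y x| ≤ S) (hε : 0 < ε) :
    volume (euclNbhd (graphOn y (Ioc 0 T)) ε) ≤
      ENNReal.ofReal ((b + 2 * ε) * (2 * S + 2 * ε) +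
        6 * ε * (∫ x in b..T, |derivWithin y (Ioc 0 T) x|) + 6 * ε * (T - b) + 12 * ε ^ 2) := by
  have hsplit : graphOn y (Ioc 0 T) ⊆ graphOn y (Ioc 0 b) ∪ graphOn y (Icc b T) := by
    rw [← Ioc_union_Ioc_eq_Ioc hb.1.le hb.2, graphOn_union]
    exact union_subset_union_right _ (image_mono Ioc_subset_Icc_self)
  have hnear : graphOn y (Ioc 0 b) ⊆ Icc 0 b ×ˢ Icc (-S) S := by
    rintro _ ⟨x, hx, rfl⟩
    exact ⟨Ioc_subset_Icc_self hx, abs_le.1 (hS x hx)⟩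
  have hfar := (isVariationMajorant_integral_abs_derivWithin hy (uniqueDiffOn_Ioc 0 T)
    fun x hx => ⟨hb.1.trans_le hx.1, hx.2⟩).volume_euclNbhd_graphOn_le hb.2 hε
  simp only [intervalIntegral.integral_same, sub_zero] at hfar
  have hS₀ : 0 ≤ S := (abs_nonneg _).trans (hS b ⟨hb.1, le_rfl⟩)
  have hI₀ : 0 ≤ ∫ x in b..T, |derivWithin y (Ioc 0 T) x| :=
    intervalIntegral.integral_nonneg hb.2 fun _ _ => abs_nonneg _
  calc volume (euclNbhd (graphOn y (Ioc 0 T)) ε)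
      ≤ volume (euclNbhd (graphOn y (Ioc 0 b)) ε) +
          volume (euclNbhd (graphOn y (Icc b T)) ε) :=
        (measure_mono (euclNbhd_mono hsplit ε)).trans
          (by rw [euclNbhd_union]; exact measure_union_le _ _)
    _ ≤ _ := add_le_add (volume_euclNbhd_le_of_subset_prod hnear ε) hfar
    _ = _ := by
        rw [← ENNReal.ofReal_mul (by linarith [hb.1]),
          ← ENNReal.ofReal_add (by nlinarith [hb.1]) (by nlinarith [hb.2])]
        congr 1
        ring

lemma exists_prod_subset_euclNbhd_graphOn {f : ℝ → ℝ} {L R ε : ℝ} (hLR : L ≤ R)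
    (hε : R - L ≤ ε) (hf : ContinuousOn f (Icc L R)) (hL : f L = 0) :
    ∃ J : Set ℝ, MeasurableSet J ∧
      volume J = ENNReal.ofReal (sSup ((fun x => |f x|) '' Icc L R)) ∧
      Ioo L R ×ˢ J ⊆ euclNbhd (graphOn f (Icc L R)) ε := by
  obtain ⟨ξ, hξ, hξmax⟩ : sSup ((fun x => |f x|) '' Icc L R) ∈ (fun x => |f x|) '' Icc L R :=
    (isCompact_Icc.image_of_continuousOn hf.abs).sSup_mem ((nonempty_Icc.2 hLR).image _)
  refine ⟨uIcc 0 (f ξ), measurableSet_uIcc, ?_, ?_⟩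
  · rw [Real.volume_interval, sub_zero]
    exact congrArg _ hξmax
  rintro ⟨x', w⟩ ⟨hx', hw⟩
  have hLξ : uIcc L ξ ⊆ Icc L R := by rw [uIcc_of_le hξ.1]; exact Icc_subset_Icc_right hξ.2
  obtain ⟨x, hx, rfl⟩ := intermediate_value_uIcc (hf.mono hLξ) (by rwa [hL])
  have hxLR := hLξ hx
  exact mk_mem_euclNbhd ⟨x, hxLR, rfl⟩
    (abs_lt.2 ⟨by linarith [hxLR.2, hx'.1], by linarith [hxLR.1, hx'.2]⟩)

lemma ofReal_tsum_le_volume_euclNbhd_graphOn {f : ℝ → ℝ} {b : ℕ → ℝ} {s : Set ℝ} {ε : ℝ}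
    (hb : Antitone b) (hf : ContinuousOn f s) (hbs : ∀ n, Icc (b (n + 1)) (b n) ⊆ s)
    (hzero : ∀ n, f (b (n + 1)) = 0) (hgap : ∀ n, b n - b (n + 1) ≤ ε) :
    ENNReal.ofReal
        (∑' n, sSup ((fun x => |f x|) '' Icc (b (n + 1)) (b n)) * (b n - b (n + 1))) ≤
      volume (euclNbhd (graphOn f s) ε) := by
  set m : ℕ → ℝ := fun n => sSup ((fun x => |f x|) '' Icc (b (n + 1)) (b n))
  by_cases hsum : Summable fun n => m n * (b n - b (n + 1))
  swap
  · rw [tsum_eq_zero_of_not_summable hsum, ENNReal.ofReal_zero]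
    exact zero_le
  have hm : ∀ n, 0 ≤ m n := fun n =>
    Real.sSup_nonneg (by rintro _ ⟨x, -, rfl⟩; exact abs_nonneg _)
  have hb' : ∀ n, b (n + 1) ≤ b n := fun n => hb n.le_succ
  choose J hJ hvol hsub using fun n =>
    exists_prod_subset_euclNbhd_graphOn (hb' n) (hgap n) (hf.mono (hbs n)) (hzero n)
  have hdisj : Pairwise (Function.onFun Disjoint fun n => Ioo (b (n + 1)) (b n) ×ˢ J n) :=
    fun i j hij => disjoint_prod.2 (Or.inl (by simpa using hb.pairwise_disjoint_on_Ioo_succ hij))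
  calc ENNReal.ofReal (∑' n, m n * (b n - b (n + 1)))
      = ∑' n, volume (Ioo (b (n + 1)) (b n) ×ˢ J n) := by
        rw [ENNReal.ofReal_tsum_of_nonneg (fun n => mul_nonneg (hm n) (sub_nonneg.2 (hb' n))) hsum]
        refine tsum_congr fun n => ?_
        rw [Measure.volume_eq_prod, Measure.prod_prod, Real.volume_Ioo, hvol,
          ENNReal.ofReal_mul (hm n), mul_comm]
    _ = volume (⋃ n, Ioo (b (n + 1)) (b n) ×ˢ J n) :=
        (measure_iUnion hdisj fun n => measurableSet_Ioo.prod (hJ n)).symm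
    _ ≤ volume (euclNbhd (graphOn f s) ε) :=
        measure_mono (iUnion_subset fun n => (hsub n).trans (euclNbhd_mono (image_mono (hbs n)) ε))

lemma volume_euclNbhd_graphOn_Ioc_le_rpow {y : ℝ → ℝ} {T s b d B c ε : ℝ} (hs : 1 ≤ s)
    (hy : ContDiffOn ℝ 1 y (Ioc 0 T)) (hB : ∀ x ∈ Ioc 0 T, |y x| ≤ B)
    (hb : 0 < b) (hbd : b ≤ d) (hd : d ≤ T) (hε : 0 < ε) (hε₁ : ε ≤ 1)
    (hbound : b * sSup ((fun x => |y x|) '' Ioc 0 b) +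
        ε * ∫ x in b..d, |derivWithin y (Ioc 0 T) x| ≤ c * ε ^ (2 - s)) :
    volume (euclNbhd (graphOn y (Ioc 0 T)) ε) ≤
      ENNReal.ofReal ((6 * c + 6 * T + 4 * B +
        6 * (∫ x in d..T, |derivWithin y (Ioc 0 T) x|) + 16) * ε ^ (2 - s)) := by
  set S := sSup ((fun x => |y x|) '' Ioc 0 b)
  set I := ∫ x in b..d, |derivWithin y (Ioc 0 T) x|
  set I' := ∫ x in d..T, |derivWithin y (Ioc 0 T) x|
  set E := ε ^ (2 - s)
  have hB' : ∀ x ∈ Ioc 0 b, |y x| ≤ B := fun x hx => hB x ⟨hx.1, hx.2.trans (hbd.trans hd)⟩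
  have hS : ∀ x ∈ Ioc 0 b, |y x| ≤ S := fun x hx =>
    le_csSup ⟨B, by rintro _ ⟨x, hx, rfl⟩; exact hB' x hx⟩ ⟨x, hx, rfl⟩
  have hSB : S ≤ B :=
    csSup_le ((nonempty_Ioc.2 hb).image _) (by rintro _ ⟨x, hx, rfl⟩; exact hB' x hx)
  have hS₀ : 0 ≤ S := (abs_nonneg _).trans (hS b ⟨hb, le_rfl⟩)
  have hint : ∀ u v, b ≤ u → u ≤ v → v ≤ T →
      IntervalIntegrable (fun x => |derivWithin y (Ioc 0 T) x|) volume u v :=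
    fun u v hu huv hv => intervalIntegrable_abs_derivWithin hy (uniqueDiffOn_Ioc 0 T)
      (by rw [uIcc_of_le huv]; exact fun x hx => ⟨hb.trans_le (hu.trans hx.1), hx.2.trans hv⟩)
  have hsplit : ∫ x in b..T, |derivWithin y (Ioc 0 T) x| = I + I' :=
    (intervalIntegral.integral_add_adjacent_intervals (hint b d le_rfl hbd hd)
      (hint d T hbd hd le_rfl)).symm
  have hI : 0 ≤ I := intervalIntegral.integral_nonneg hbd fun _ _ => abs_nonneg _
  have hI' : 0 ≤ I' := intervalIntegral.integral_nonneg hd fun _ _ => abs_nonneg _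
  have hεE : ε ≤ E := by
    simpa using rpow_le_rpow_of_exponent_ge hε hε₁ (show 2 - s ≤ 1 by linarith)
  have hε₂ : ε ^ 2 ≤ ε := by nlinarith
  refine (volume_euclNbhd_graphOn_Ioc_le hy ⟨hb, hbd.trans hd⟩ hS hε).trans
    (ENNReal.ofReal_le_ofReal ?_)
  rw [hsplit]
  nlinarith [mul_le_mul hεE hSB hS₀ (hε.le.trans hεE), mul_le_mul_of_nonneg_right hεE hI',
    mul_le_mul_of_nonneg_right hεE (hb.le.trans (hbd.trans hd)), mul_nonneg hb.le hS₀,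
    mul_nonneg hε.le hb.le]

theorem fractal_oscillation_criterion_general
    (T s : ℝ) (hs : s ∈ Set.Ico (1 : ℝ) 2)
    (y : ℝ → ℝ)
    (hy_smooth : ContDiffOn ℝ 1 y (Set.Ioc 0 T))
    (hy_bdd : ∃ B : ℝ, ∀ x ∈ Set.Ioc 0 T, |y x| ≤ B)
    (a : ℕ → ℝ)
    (ha_mem : ∀ n, a n ∈ Set.Ioc 0 T)
    (ha_anti : StrictAnti a)
    (ha_zero : ∀ n, y (a n) = 0)
    (c₁ c₂ ε₀ : ℝ) (hc₁ : 0 < c₁) (hε₀ : 0 < ε₀)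
    (k : ℝ → ℕ)
    (hk : ∀ ε ∈ Set.Ioo 0 ε₀, ∀ n ≥ k ε, a n - a (n + 1) ≤ ε)
    (hleft : ∀ ε ∈ Set.Ioo 0 ε₀,
      c₁ * ε ^ (2 - s) ≤ ∑' n : ℕ,
        sSup ((fun x => |y x|) '' Set.Icc (a (n + k ε + 1)) (a (n + k ε))) *
          (a (n + k ε) - a (n + k ε + 1)))
    (hright : ∀ ε ∈ Set.Ioo 0 ε₀,
      a (k ε) * sSup ((fun x => |y x|) '' Set.Ioc 0 (a (k ε))) +
        ε * ∫ x in (a (k ε))..(a 0), |derivWithin y (Set.Ioc 0 T) x| ≤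
          c₂ * ε ^ (2 - s))
    (G : Set (ℝ × ℝ)) (hG : G = {P : ℝ × ℝ | ∃ x ∈ Set.Ioc 0 T, P = (x, y x)}) :
    lowerBoxDim G = s ∧ upperBoxDim G = s ∧
    0 < lowerMinkowskiContent G s ∧ upperMinkowskiContent G s < ⊤ := by
  obtain ⟨B, hB⟩ := hy_bdd
  obtain rfl : G = graphOn y (Ioc 0 T) := by
    rw [hG]
    ext P
    simp only [graphOn, mem_image, mem_ofPred_eq, eq_comm]
  have hlower : ∀ ε ∈ Ioo 0 ε₀,
      ENNReal.ofReal (c₁ * ε ^ (2 - s)) ≤ volume (euclNbhd (graphOn y (Ioc 0 T)) ε) := by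
    intro ε hε
    have hrect := ofReal_tsum_le_volume_euclNbhd_graphOn (b := fun n => a (n + k ε)) (ε := ε)
      (fun m n hmn => ha_anti.antitone (by omega)) hy_smooth.continuousOn
      (fun n x hx => ⟨(ha_mem _).1.trans_le hx.1, hx.2.trans (ha_mem _).2⟩)
      (fun n => ha_zero _)
      (fun n => by simpa [Nat.add_right_comm] using hk ε hε (n + k ε) le_add_self)
    simp only [Nat.add_right_comm _ 1] at hrect
    exact (ENNReal.ofReal_le_ofReal (hleft ε hε)).trans hrect
  have hupper : ∀ ε ∈ Ioo 0 (min ε₀ 1), volume (euclNbhd (graphOn y (Ioc 0 T)) ε) ≤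
      ENNReal.ofReal ((6 * c₂ + 6 * T + 4 * B +
        6 * (∫ x in a 0..T, |derivWithin y (Ioc 0 T) x|) + 16) * ε ^ (2 - s)) :=
    fun ε hε => volume_euclNbhd_graphOn_Ioc_le_rpow hs.1 hy_smooth hB (ha_mem _).1
      (ha_anti.antitone (Nat.zero_le _)) (ha_mem 0).2 hε.1 (hε.2.trans_le (min_le_right _ _)).le
      (hright ε ⟨hε.1, hε.2.trans_le (min_le_left _ _)⟩)
  exact boxDim_eq_of_volume_euclNbhd_bounds (zero_le_one.trans hs.1) hc₁
    (mem_of_superset (Ioo_mem_nhdsGT hε₀) hlower)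
    (mem_of_superset (Ioo_mem_nhdsGT (lt_min hε₀ one_pos)) hupper)

/-- criterion for fractal oscillation (Theorem 2.1 of [mersat],
cited as Theorem `mersat`): under the stated summation and integral bounds the graph
of `y` has box dimension `s` and is Minkowski nondegenerate. -/
theorem fractal_oscillation_criterion
    (T s : ℝ) (hT : 0 < T) (hs : s ∈ Set.Ico (1 : ℝ) 2)
    (y : ℝ → ℝ)
    (hy_smooth : ContDiffOn ℝ 1 y (Set.Ioc 0 T))
    (hy_bdd : ∃ B : ℝ, ∀ x ∈ Set.Ioc 0 T, |y x| ≤ B)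
    (a : ℕ → ℝ)
    (ha_mem : ∀ n, a n ∈ Set.Ioc 0 T)
    (ha_anti : StrictAnti a)
    (ha_lim : Filter.Tendsto a Filter.atTop (nhds 0))
    (ha_zero : ∀ n, y (a n) = 0)
    (ha_ne : ∀ n, ∀ x ∈ Set.Ioo (a (n + 1)) (a n), y x ≠ 0)
    (c₁ c₂ ε₀ : ℝ) (hc₁ : 0 < c₁) (hc₂ : 0 < c₂) (hε₀ : 0 < ε₀)
    (k : ℝ → ℕ)
    (hk : ∀ ε ∈ Set.Ioo 0 ε₀, ∀ n ≥ k ε, a n - a (n + 1) ≤ ε)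
    (hleft : ∀ ε ∈ Set.Ioo 0 ε₀,
      c₁ * ε ^ (2 - s) ≤ ∑' n : ℕ,
        sSup ((fun x => |y x|) '' Set.Icc (a (n + k ε + 1)) (a (n + k ε))) *
          (a (n + k ε) - a (n + k ε + 1)))
    (hright : ∀ ε ∈ Set.Ioo 0 ε₀,
      a (k ε) * sSup ((fun x => |y x|) '' Set.Ioc 0 (a (k ε))) +
        ε * ∫ x in (a (k ε))..(a 0), |derivWithin y (Set.Ioc 0 T) x| ≤
          c₂ * ε ^ (2 - s))
    (G : Set (ℝ × ℝ)) (hG : G = {P : ℝ × ℝ | ∃ x ∈ Set.Ioc 0 T, P = (x, y x)}) :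
    lowerBoxDim G = s ∧ upperBoxDim G = s ∧
    0 < lowerMinkowskiContent G s ∧ upperMinkowskiContent G s < ⊤ :=
  fractal_oscillation_criterion_general T s hs y hy_smooth hy_bdd a ha_mem ha_anti ha_zero c₁ c₂ ε₀
    hc₁ hε₀ k hk hleft hright G hG
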